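/- In the game G'_{C5}, the deterministic strategy in which player 1 outputs 1 on every input and each of the players 2, 3, 4, 5 outputs the negation of his input loses exactly the three questions Q_1, Q'_2 and Q'_5, and wins the other eight questions; hence it loses with probability exactly 3/13. -/
import Mathlib


/-- The strategy `f` wins the question `Q_a` of `G'_{C5}` (all inputs 1). -/
abbrev winsQa (f : ZMod 5 → ZMod 2 → ZMod 2) : Prop :=
  (∑ i : ZMod 5, f i 1) = 1

/-- The strategy `f` wins the question `Q_i` of `G'_{C5}` (player `i` gets
input 1, the others 0). -/
abbrev winsQi (f : ZMod 5 → ZMod 2 → ZMod 2) (i : ZMod 5) : Prop :=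
  f (i - 1) 0 + f i 1 + f (i + 1) 0 = 0

/-- The strategy `f` wins the question `Q'_i` of `G'_{C5}` (players `i-1` and
`i+1` get input 1, the others 0; the predicate is on all players except `i`). -/
abbrev winsQi' (f : ZMod 5 → ZMod 2 → ZMod 2) (i : ZMod 5) : Prop :=
  (∑ j ∈ Finset.univ.erase i,
    f j (if j = i - 1 ∨ j = i + 1 then (1 : ZMod 2) else 0)) = 0

/-- The strategy in which player 1 always outputs 1 and players 2,3,4,5 output
the negation of their input. -/
abbrev oneNotStrategy : ZMod 5 → ZMod 2 → ZMod 2 :=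
  fun i x => if i = 1 then 1 else 1 + x

open Classical in
/-- In `G'_{C5}`, the strategy where player 1 always outputs 1 and players
2,3,4,5 output the negation of their input loses exactly the questions `Q_1`,
`Q'_2` and `Q'_5`, wins the other eight questions, and thus loses with
probability exactly `3/13`. -/
theorem gC5'_oneNot_loses_three_thirteenths :
    winsQa oneNotStrategy ∧
    ¬ winsQi oneNotStrategy 1 ∧
    (∀ i : ZMod 5, i ≠ 1 → winsQi oneNotStrategy i) ∧
    ¬ winsQi' oneNotStrategy 2 ∧
    ¬ winsQi' oneNotStrategy 5 ∧
    (∀ i : ZMod 5, i ≠ 2 → i ≠ 5 → winsQi' oneNotStrategy i) ∧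
    ((3 / 13 : ℝ) * (if winsQa oneNotStrategy then 0 else 1) +
      (∑ i : ZMod 5, (1 / 13 : ℝ) * (if winsQi oneNotStrategy i then 0 else 1)) +
      (∑ i : ZMod 5, (1 / 13 : ℝ) * (if winsQi' oneNotStrategy i then 0 else 1))
        = 3 / 13) := by
  refine ⟨by decide, by decide, by decide, by decide, by decide, by decide, ?_⟩
  have h1 : winsQa oneNotStrategy := by decide
  have h2 : ∀ i : ZMod 5, winsQi oneNotStrategy i ↔ i ≠ 1 := by decide
  have h3 : ∀ i : ZMod 5, winsQi' oneNotStrategy i ↔ (i ≠ 2 ∧ i ≠ 5) := by decide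
  have hu : (Finset.univ : Finset (ZMod 5)) = {0, 1, 2, 3, 4} := by decide
  simp only [h1, h2, h3, hu, if_true]
  simp +decide [Finset.sum_insert, Finset.mem_insert]
  norm_num
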